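/- Let x_1, …, x_n ∈ ℝ^d be distinct and z_1, …, z_n ∈ ℝ^{d_z} be distinct. Let G : ℝ^K × ℝ^{d_z} → ℝ^d be continuous, f : ℝ^J × ℝ^d → ℝ be arbitrary, and 𝒲 ⊆ ℝ^K. Assume: (D-representation) for any distinct v_1, …, v_{2n} ∈ ℝ^d and any b_1, …, b_{2n} ∈ ℝ there exists θ ∈ ℝ^J with f(θ, v_i) = b_i for all i; (G-representation) for any y_1, …, y_n ∈ ℝ^d there exists w ∈ 𝒲 with G(w, z_i) = y_i for all i; (path-keeping) for any continuous path Y(t), t ∈ [0,1], in (ℝ^d)^n and any w₀ ∈ 𝒲 with G(w₀, z_i) = Y_i(0) for all i, there is a continuous path w(t), t ∈ [0,1], with w(0) = w₀ and G(w(t), z_i) = Y_i(t) for all i and t. Assume h : ℝ → ℝ is concave with sup_{t∈ℝ} h(t) = 0 and h(0) < 0. Define φ_R(w) = sup_{θ∈ℝ^J} (1/n) Σ_{i=1}^n h(f(θ, x_i) − f(θ, G(w, z_i))). Then every w ∈ 𝒲 is global-min-reachable for φ_R. -/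

import Mathlib

/-!
Because `f(θ, ·)` can interpolate arbitrary values at the `2n` points `x k`, `G(w, z k)`, the
objective depends only on the configuration `y k = G(w, z k)`. Read `y` as the map `x k ↦ y k`
(fixing all other points), and let `c` be the number of samples lying on its cycles. Along a cycle
the differences `f(θ, x k) - f(θ, y k)` sum to zero, so by Jensen these terms contribute at most
`c h(0)`; off the cycles the potential "`T` times the distance to the cycles" makes every difference
equal to `T`, and `h(T)` can be taken arbitrarily close to `sup h = 0`. Hence the objective equals
`c h(0) / n`, which is minimal when every sample lies on a cycle.

It therefore suffices to move the configuration continuously without ever decreasing `c` until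
`c = n`. While `c < n`, some sample `x i` off the cycles is hit by no `y k`; sliding `y i` straight
to `x i` creates and destroys no cycle before the endpoint, where `x i` becomes a fixed point.
Path-keeping lifts the resulting path of configurations to a path of weights.
-/

open scoped BigOperators

/-- A point `w` is global-min-reachable for `F` if there is a continuous path starting
at `w`, along which `F` is non-increasing, ending at a global minimizer of `F`. -/
def GlobalMinReachable {E : Type*} [TopologicalSpace E] (F : E → ℝ) (w : E) : Prop :=
  ∃ γ : ℝ → E, ContinuousOn γ (Set.Icc 0 1) ∧ γ 0 = w ∧
    (∀ s ∈ Set.Icc (0 : ℝ) 1, ∀ t ∈ Set.Icc (0 : ℝ) 1, s ≤ t → F (γ t) ≤ F (γ s)) ∧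
    (∀ w', F (γ 1) ≤ F w')

open Finset Function

theorem ConcaveOn.sum_le_card_mul_of_sum_eq_zero {ι : Type*} {h : ℝ → ℝ}
    (hh : ConcaveOn ℝ Set.univ h) {s : Finset ι} {a : ι → ℝ} (ha : ∑ i ∈ s, a i = 0) :
    ∑ i ∈ s, h (a i) ≤ #s * h 0 := by
  rcases s.eq_empty_or_nonempty with rfl | hs
  · simp
  have hcard : (0 : ℝ) < #s := by exact_mod_cast hs.card_pos
  have hjensen := hh.le_map_sum (t := s) (w := fun _ => (#s : ℝ)⁻¹) (p := a)
    (fun _ _ => by positivity) (by simp [hcard.ne']) (fun _ _ => Set.mem_univ _)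
  simp only [smul_eq_mul, ← Finset.mul_sum, ha, mul_zero] at hjensen
  rwa [inv_mul_le_iff₀ hcard] at hjensen

theorem IsLUB.range_const_add_mul {h : ℝ → ℝ} (hh : IsLUB (Set.range h) 0) (a : ℝ) {b : ℝ}
    (hb : 0 ≤ b) : IsLUB (Set.range fun t => a + b * h t) a := by
  refine ⟨?_, fun u hu => ?_⟩
  · rintro _ ⟨t, rfl⟩
    nlinarith [hh.1 ⟨t, rfl⟩]
  rcases hb.eq_or_lt with rfl | hb
  · simpa using hu ⟨0, rfl⟩
  have hub : (u - a) / b ∈ upperBounds (Set.range h) := by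
    rintro _ ⟨t, rfl⟩
    rw [le_div_iff₀ hb]
    linarith [hu ⟨t, rfl⟩]
  have := hh.2 hub
  rw [le_div_iff₀ hb] at this
  linarith

namespace Function

open Set

variable {α : Type*} {f g : α → α} {p v : α} {s : Set α} {X : Finset α}

theorem periodicPts_subset_of_eqOn (h : EqOn f g (periodicPts f)) :
    periodicPts f ⊆ periodicPts g := by
  rintro p ⟨m, hm, hp⟩
  have hiter : ∀ k, g^[k] p = f^[k] p := by
    intro k
    induction k with
    | zero => rfl
    | succ k ih =>
      rw [iterate_succ_apply', iterate_succ_apply', ih]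
      exact (h ((bijOn_periodicPts f).mapsTo.iterate k ⟨m, hm, hp⟩)).symm
  exact ⟨m, hm, (hiter m).trans hp⟩

theorem periodicPts_subset_periodicPts_update [DecidableEq α] (hp : p ∉ periodicPts f) :
    periodicPts f ⊆ periodicPts (update f p v) :=
  periodicPts_subset_of_eqOn fun _ hq => (update_of_ne (ne_of_mem_of_not_mem hq hp) v f).symm

theorem periodicPts_update_of_notMem_range [DecidableEq α] (hp : p ∉ range f) (hv : v ≠ p) :
    periodicPts (update f p v) = periodicPts f := by
  have hp' : p ∉ range (update f p v) := by
    rintro ⟨q, hq⟩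
    by_cases hqp : q = p
    · exact hv (by rwa [hqp, update_self] at hq)
    · exact hp ⟨q, by rwa [update_of_ne hqp] at hq⟩
  refine (periodicPts_subset_of_eqOn fun q hq => ?_).antisymm
    (periodicPts_subset_periodicPts_update fun h => hp (periodicPts_subset_range h))
  exact update_of_ne (ne_of_mem_of_not_mem hq fun h => hp' (periodicPts_subset_range h)) v f

theorem apply_eq_of_mem_periodicPts_of_isFixedPt (hp : p ∈ periodicPts f)
    (h : IsFixedPt f (f p)) : f p = p := by
  obtain ⟨m, hm, hpm⟩ := hp
  calc f p = f^[m - 1] (f p) := (h.iterate (m - 1)).symm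
    _ = f^[m] p := by rw [← iterate_succ_apply, Nat.succ_eq_add_one, Nat.sub_add_cancel hm]
    _ = p := hpm

theorem mapsTo_periodicPts_inter (hs : ∀ q ∉ s, f q = q) :
    MapsTo f (periodicPts f ∩ s) (periodicPts f ∩ s) := by
  rintro p ⟨hper, hps⟩
  refine ⟨(bijOn_periodicPts f).mapsTo hper, by_contra fun hfp => hfp ?_⟩
  rwa [apply_eq_of_mem_periodicPts_of_isFixedPt hper (hs _ hfp)]

theorem exists_iterate_mem_periodicPts (hs : s.Finite) (hf : MapsTo f s s) (hp : p ∈ s) :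
    ∃ m, f^[m] p ∈ periodicPts f := by
  obtain ⟨a, b, hab, he⟩ :=
    hs.exists_lt_map_eq_of_forall_mem (f := (f^[·] p)) fun k => hf.iterate k hp
  refine ⟨a, b - a, by omega, ?_⟩
  change f^[b - a] (f^[a] p) = f^[a] p
  rw [← iterate_add_apply, Nat.sub_add_cancel hab.le, he]

/-- `0` also when the orbit of `p` never reaches a periodic point. -/
noncomputable def preperiod (f : α → α) (p : α) : ℕ :=
  sInf {m | f^[m] p ∈ periodicPts f}

theorem preperiod_eq_zero (hp : p ∈ periodicPts f) : preperiod f p = 0 :=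
  Nat.sInf_eq_zero.mpr (Or.inl hp)

theorem preperiod_apply_add_one (hp : p ∉ periodicPts f)
    (h : ∃ m, f^[m] p ∈ periodicPts f) : preperiod f (f p) + 1 = preperiod f p := by
  have hpos : 1 ≤ preperiod f p := by
    refine Nat.one_le_iff_ne_zero.mpr fun h0 => ?_
    rcases Nat.sInf_eq_zero.mp h0 with h0 | h0
    · exact hp h0
    · obtain ⟨m, hm⟩ := h
      exact h0.subset hm
  simpa only [preperiod, iterate_succ_apply] using Nat.sInf_add hpos

theorem exists_iterate_mem_periodicPts_of_eq_self_off (hf : ∀ q ∉ X, f q = q) (p : α) :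
    ∃ m, f^[m] p ∈ periodicPts f := by
  refine exists_iterate_mem_periodicPts (s := insert p (↑X ∪ f '' ↑X))
    ((X.finite_toSet.union (X.finite_toSet.image f)).insert p) (fun q hq => ?_)
    (Set.mem_insert p _)
  by_cases hqX : q ∈ X
  · exact Or.inr (Or.inr (Set.mem_image_of_mem f hqX))
  · rwa [hf q hqX]

theorem sum_sub_apply_filter_periodicPts {β : Type*} [AddCommGroup β]
    [DecidablePred (· ∈ periodicPts f)] (hf : ∀ q ∉ X, f q = q) (g : α → β) :
    ∑ p ∈ X with p ∈ periodicPts f, (g p - g (f p)) = 0 := by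
  set Q := X.filter (· ∈ periodicPts f)
  have hQ : (Q : Set α) = periodicPts f ∩ X := by
    rw [Finset.coe_filter, Set.inter_comm]; rfl
  have hmaps : MapsTo f Q Q := hQ ▸ mapsTo_periodicPts_inter hf
  have hbij : BijOn f Q Q := (Q.finite_toSet.injOn_iff_bijOn_of_mapsTo hmaps).mp
    ((bijOn_periodicPts f).injOn.mono (hQ ▸ Set.inter_subset_left))
  rw [Finset.sum_sub_distrib, sub_eq_zero]
  exact (Finset.sum_nbij f hbij.mapsTo hbij.injOn hbij.surjOn fun _ _ => rfl).symm

theorem exists_sub_apply_eq_of_notMem_periodicPts (hf : ∀ q ∉ X, f q = q) (T : ℝ) :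
    ∃ g : α → ℝ, (∀ p ∈ periodicPts f, g (f p) = g p) ∧
      ∀ p ∉ periodicPts f, g p - g (f p) = T := by
  refine ⟨fun p => T * preperiod f p, fun p hp => ?_, fun p hp => ?_⟩
  · simp only [preperiod_eq_zero hp, preperiod_eq_zero ((bijOn_periodicPts f).mapsTo hp)]
  · dsimp only
    rw [← preperiod_apply_add_one hp (exists_iterate_mem_periodicPts_of_eq_self_off hf p)]
    push_cast
    ring

theorem exists_mem_notMem_range (hf : ∀ q ∉ X, f q = q) (h : ∃ p ∈ X, p ∉ periodicPts f) :
    ∃ p ∈ X, p ∉ range f := by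
  classical
  obtain ⟨p, hp, hmax⟩ := (X.filter (· ∉ periodicPts f)).exists_max_image (preperiod f)
    (by simpa [Finset.Nonempty] using h)
  rw [Finset.mem_filter] at hp
  refine ⟨p, hp.1, ?_⟩
  rintro ⟨q, rfl⟩
  have hq : q ∉ periodicPts f := fun hq => hp.2 ((bijOn_periodicPts f).mapsTo hq)
  have hqX : q ∈ X := by
    by_contra hqX
    exact hqX (hf q hqX ▸ hp.1)
  have := hmax q (Finset.mem_filter.mpr ⟨hqX, hq⟩)
  have := preperiod_apply_add_one hq (exists_iterate_mem_periodicPts_of_eq_self_off hf q)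
  omega

variable [DecidablePred (· ∈ periodicPts f)] {h : ℝ → ℝ}

theorem sum_le_card_filter_periodicPts_mul (hf : ∀ q ∉ X, f q = q)
    (hconc : ConcaveOn ℝ Set.univ h) (hle : ∀ t, h t ≤ 0) (g : α → ℝ) :
    ∑ p ∈ X, h (g p - g (f p)) ≤ #(X.filter (· ∈ periodicPts f)) * h 0 := by
  rw [← X.sum_filter_add_sum_filter_not (· ∈ periodicPts f)]
  have hper := hconc.sum_le_card_mul_of_sum_eq_zero (sum_sub_apply_filter_periodicPts hf g)
  have hrest : ∑ p ∈ X with p ∉ periodicPts f, h (g p - g (f p)) ≤ 0 :=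
    Finset.sum_nonpos fun p _ => hle _
  linarith

theorem exists_sum_eq_card_filter_periodicPts_mul (hf : ∀ q ∉ X, f q = q) (T : ℝ) :
    ∃ g : α → ℝ, ∑ p ∈ X, h (g p - g (f p)) =
      #(X.filter (· ∈ periodicPts f)) * h 0 + #(X.filter (· ∉ periodicPts f)) * h T := by
  obtain ⟨g, hper, hrest⟩ := exists_sub_apply_eq_of_notMem_periodicPts hf T
  refine ⟨g, ?_⟩
  rw [← X.sum_filter_add_sum_filter_not (· ∈ periodicPts f)]
  congr 1
  · rw [Finset.sum_congr rfl fun p hp => by rw [hper p (Finset.mem_filter.mp hp).2, sub_self]]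
    simp only [Finset.sum_const, nsmul_eq_mul]
  · rw [Finset.sum_congr rfl fun p hp => by rw [hrest p (Finset.mem_filter.mp hp).2]]
    simp only [Finset.sum_const, nsmul_eq_mul]

end Function

theorem exists_agree_on_two_tuples {Θ E : Type*} [Infinite E] {N : ℕ} {F : Θ × E → ℝ}
    (hF : ∀ v : Fin (2 * N) → E, Injective v →
      ∀ b : Fin (2 * N) → ℝ, ∃ θ, ∀ i, F (θ, v i) = b i)
    (x y : Fin N → E) (g : E → ℝ) :
    ∃ θ, (∀ k, F (θ, x k) = g (x k)) ∧ ∀ k, F (θ, y k) = g (y k) := by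
  classical
  have hcard : #(univ.image x ∪ univ.image y) ≤ 2 * N :=
    calc #(univ.image x ∪ univ.image y) ≤ #(univ.image x) + #(univ.image y) :=
          card_union_le _ _
      _ ≤ N + N := add_le_add (card_image_le.trans_eq (card_fin N))
          (card_image_le.trans_eq (card_fin N))
      _ = 2 * N := (two_mul N).symm
  obtain ⟨t, hst, ht⟩ := Infinite.exists_superset_card_eq _ _ hcard
  let e : Fin (2 * N) ≃ t := (t.equivFin.trans (finCongr ht)).symm
  obtain ⟨θ, hθ⟩ :=
    hF (fun i => e i) (Subtype.val_injective.comp e.injective) fun i => g (e i)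
  have hagree : ∀ p ∈ t, F (θ, p) = g p := fun p hp => by simpa using hθ (e.symm ⟨p, hp⟩)
  exact ⟨θ, fun k => hagree _ (hst (by simp)), fun k => hagree _ (hst (by simp))⟩

theorem Path.monotone_comp_trans {X β : Type*} [TopologicalSpace X] [Preorder β] {F : X → β}
    {a b c : X} {γ : Path a b} {γ' : Path b c} (hγ : Monotone (F ∘ γ))
    (hγ' : Monotone (F ∘ γ')) : Monotone (F ∘ γ.trans γ') := by
  intro s t hst
  have hst' : (s : ℝ) ≤ t := hst
  simp only [Function.comp_apply, Path.trans_apply]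
  split_ifs with hs ht ht
  · exact hγ (Subtype.mk_le_mk.mpr (by linarith))
  · calc F (γ _) ≤ F (γ 1) := hγ (Subtype.mk_le_mk.mpr (by linarith))
      _ = F (γ' 0) := by simp
      _ ≤ F (γ' _) := hγ' (Subtype.mk_le_mk.mpr (by linarith))
  · exact absurd (hst'.trans ht) hs
  · exact hγ' (Subtype.mk_le_mk.mpr (by linarith))

section SamplePoints

open scoped Classical

variable {E : Type*} {n : ℕ} {x : Fin n → E}

/-- The configuration `y` acts on `E` by `x k ↦ y k`, fixing every point that is not a sample;
`periodicCount x y` is the number of samples lying on a cycle of this map. -/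
noncomputable def periodicCount (x y : Fin n → E) : ℕ :=
  #((univ.image x).filter (· ∈ periodicPts (extend x y id)))

theorem extend_apply_of_notMem_image (y : Fin n → E) :
    ∀ q ∉ univ.image x, extend x y id q = q :=
  fun _ hq => extend_apply' _ _ _ (by simpa using hq)

theorem periodicCount_le (x y : Fin n → E) : periodicCount x y ≤ n :=
  (card_filter_le _ _).trans (card_image_le.trans_eq (card_fin n))

theorem sum_comp_sub_eq_sum_image (hx : Injective x) (y : Fin n → E) (φ : ℝ → ℝ)
    (g : E → ℝ) :
    ∑ k, φ (g (x k) - g (y k)) = ∑ p ∈ univ.image x, φ (g p - g (extend x y id p)) := by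
  rw [sum_image hx.injOn]
  simp only [hx.extend_apply]

theorem extend_update (hx : Injective x) (y : Fin n → E) (i : Fin n) (v : E) :
    extend x (update y i v) id = update (extend x y id) (x i) v := by
  funext q
  by_cases hq : ∃ k, x k = q
  · obtain ⟨k, rfl⟩ := hq
    rw [hx.extend_apply]
    by_cases hki : k = i
    · subst hki; simp
    · rw [update_of_ne hki, update_of_ne (hx.ne hki), hx.extend_apply]
  · rw [extend_apply' _ _ _ hq, update_of_ne fun h => hq ⟨i, h.symm⟩, extend_apply' _ _ _ hq]

theorem periodicCount_le_of_subset {y y' : Fin n → E}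
    (h : periodicPts (extend x y id) ⊆ periodicPts (extend x y' id)) :
    periodicCount x y ≤ periodicCount x y' :=
  card_le_card fun p hp => by
    rw [mem_filter] at hp ⊢
    exact ⟨hp.1, h hp.2⟩

theorem exists_forall_ne_of_periodicCount_lt (hx : Injective x) {y : Fin n → E}
    (hy : periodicCount x y < n) : ∃ i, ∀ k, y k ≠ x i := by
  have hf : ∀ q ∉ univ.image x, extend x y id q = q := extend_apply_of_notMem_image y
  have hnotper : ∃ p ∈ univ.image x, p ∉ periodicPts (extend x y id) := by
    by_contra! hall
    rw [periodicCount, filter_true_of_mem hall, card_image_of_injective _ hx, card_fin] at hy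
    exact lt_irrefl n hy
  obtain ⟨p, hp, hpr⟩ := exists_mem_notMem_range hf hnotper
  obtain ⟨i, -, rfl⟩ := mem_image.mp hp
  exact ⟨i, fun k hk => hpr ⟨x k, by rw [hx.extend_apply, hk]⟩⟩

theorem sSup_eq_periodicCount_mul {Θ : Type*} (hx : Injective x) (y : Fin n → E)
    (F : Θ × E → ℝ) {h : ℝ → ℝ} (hconc : ConcaveOn ℝ Set.univ h)
    (hsup : IsLUB (Set.range h) 0)
    (hrep : ∀ g : E → ℝ, ∃ θ, (∀ k, F (θ, x k) = g (x k)) ∧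
      ∀ k, F (θ, y k) = g (y k)) :
    sSup {s : ℝ | ∃ θ : Θ, s = (1 / (n : ℝ)) * ∑ i, h (F (θ, x i) - F (θ, y i))} =
      periodicCount x y * h 0 / n := by
  set S := {s : ℝ | ∃ θ : Θ, s = (1 / (n : ℝ)) * ∑ i, h (F (θ, x i) - F (θ, y i))}
  have hf : ∀ q ∉ univ.image x, extend x y id q = q := extend_apply_of_notMem_image y
  have hub : ∀ s ∈ S, s ≤ periodicCount x y * h 0 / n := by
    rintro _ ⟨θ, rfl⟩
    rw [sum_comp_sub_eq_sum_image hx y h fun p => F (θ, p), one_div_mul_eq_div]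
    gcongr
    exact sum_le_card_filter_periodicPts_mul hf hconc (fun t => hsup.1 ⟨t, rfl⟩) _
  have hmem : ∀ T, periodicCount x y * h 0 / n +
      (#((univ.image x).filter (· ∉ periodicPts (extend x y id))) / n) * h T ∈ S := by
    intro T
    obtain ⟨g, hg⟩ := exists_sum_eq_card_filter_periodicPts_mul hf (h := h) T
    obtain ⟨θ, hθx, hθy⟩ := hrep g
    refine ⟨θ, ?_⟩
    simp only [hθx, hθy, sum_comp_sub_eq_sum_image hx y h g, hg, periodicCount]
    ring
  refine IsLUB.csSup_eq ⟨hub, fun u hu => ?_⟩ ⟨_, hmem 0⟩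
  exact (hsup.range_const_add_mul _ (by positivity)).2 fun _ ⟨T, hT⟩ => hT ▸ hu (hmem T)

theorem notMem_range_extend (hx : Injective x) {y : Fin n → E} {i : Fin n}
    (hi : ∀ k, y k ≠ x i) : x i ∉ Set.range (extend x y id) := by
  rintro ⟨q, hq⟩
  by_cases hq' : ∃ k, x k = q
  · obtain ⟨k, rfl⟩ := hq'
    exact hi k (by rwa [hx.extend_apply] at hq)
  · rw [extend_apply' _ _ _ hq'] at hq
    exact hq' ⟨i, hq.symm⟩

variable [NormedAddCommGroup E] [NormedSpace ℝ E]

theorem exists_path_update_periodicCount_lt (hx : Injective x) {y : Fin n → E} {i : Fin n}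
    (hi : ∀ k, y k ≠ x i) :
    ∃ γ : Path y (update y i (x i)),
      Monotone (periodicCount x ∘ γ) ∧
        periodicCount x y < periodicCount x (update y i (x i)) := by
  let γ : Path y (update y i (x i)) :=
    ((Path.segment (y i) (x i)).map (continuous_const.update i continuous_id)).cast
      (update_eq_self i y).symm rfl
  have hγ : ∀ t, extend x (γ t) id =
      update (extend x y id) (x i) (AffineMap.lineMap (y i) (x i) (t : ℝ)) := fun t =>
    extend_update hx y i _
  have hnr := notMem_range_extend hx hi
  have hbefore : ∀ t : unitInterval, (t : ℝ) < 1 →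
      periodicPts (extend x (γ t) id) = periodicPts (extend x y id) := fun t ht => by
    rw [hγ]
    exact periodicPts_update_of_notMem_range hnr (by simp [hi i, ht.ne])
  have hend : periodicPts (extend x y id) ⊆ periodicPts (extend x (update y i (x i)) id) := by
    rw [extend_update hx]
    exact periodicPts_subset_periodicPts_update fun h => hnr (periodicPts_subset_range h)
  have hfix : x i ∈ periodicPts (extend x (update y i (x i)) id) :=
    mk_mem_periodicPts one_pos (by simp [IsPeriodicPt, IsFixedPt, hx.extend_apply])
  have hle : ∀ t, periodicCount x y ≤ periodicCount x (γ t) := fun t => by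
    by_cases ht : (t : ℝ) < 1
    · exact periodicCount_le_of_subset (hbefore t ht).ge
    · rw [show t = 1 from Subtype.ext (le_antisymm t.2.2 (not_lt.mp ht)), γ.target]
      exact periodicCount_le_of_subset hend
  refine ⟨γ, fun s t hst => ?_, card_lt_card ?_⟩
  · by_cases hs : (s : ℝ) < 1
    · exact (periodicCount_le_of_subset (hbefore s hs).le).trans (hle t)
    · rw [le_antisymm hst (Subtype.mk_le_mk.mpr (le_of_not_gt hs |>.trans' t.2.2))]
  · refine (ssubset_iff_of_subset fun p hp => ?_).mpr ⟨x i, ?_, ?_⟩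
    · rw [mem_filter] at hp ⊢
      exact ⟨hp.1, hend hp.2⟩
    · exact mem_filter.mpr ⟨mem_image_of_mem x (mem_univ i), hfix⟩
    · exact fun h => hnr (periodicPts_subset_range (mem_filter.mp h).2)

theorem exists_path_periodicCount_eq (hx : Injective x) (y : Fin n → E) :
    ∃ y', ∃ γ : Path y y', Monotone (periodicCount x ∘ γ) ∧ periodicCount x y' = n := by
  by_cases hy : periodicCount x y = n
  · exact ⟨y, Path.refl y, fun _ _ _ => le_rfl, hy⟩
  obtain ⟨i, hi⟩ :=
    exists_forall_ne_of_periodicCount_lt hx ((periodicCount_le x y).lt_of_ne hy)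
  obtain ⟨γ, hγ, hlt⟩ := exists_path_update_periodicCount_lt hx hi
  obtain ⟨y', γ', hγ', hy'⟩ := exists_path_periodicCount_eq hx (update y i (x i))
  exact ⟨y', γ.trans γ', Path.monotone_comp_trans hγ hγ', hy'⟩
termination_by n - periodicCount x y
decreasing_by have := periodicCount_le x (update y i (x i)); omega

end SamplePoints

theorem stmt16_general {d n dz K J : ℕ} (hd : 1 ≤ d)
    (x : Fin n → EuclideanSpace ℝ (Fin d)) (hx : Function.Injective x)
    (z : Fin n → EuclideanSpace ℝ (Fin dz))
    (G : EuclideanSpace ℝ (Fin K) × EuclideanSpace ℝ (Fin dz) → EuclideanSpace ℝ (Fin d))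
    (f : EuclideanSpace ℝ (Fin J) × EuclideanSpace ℝ (Fin d) → ℝ)
    (W : Set (EuclideanSpace ℝ (Fin K)))
    -- (D-representation)
    (hD : ∀ v : Fin (2 * n) → EuclideanSpace ℝ (Fin d), Function.Injective v →
      ∀ b : Fin (2 * n) → ℝ, ∃ θ : EuclideanSpace ℝ (Fin J), ∀ i, f (θ, v i) = b i)
    -- (path-keeping)
    (hpath : ∀ Ypath : ℝ → (Fin n → EuclideanSpace ℝ (Fin d)),
      ContinuousOn Ypath (Set.Icc 0 1) →
      ∀ w0 ∈ W, (∀ i, G (w0, z i) = Ypath 0 i) →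
      ∃ wpath : ℝ → EuclideanSpace ℝ (Fin K),
        ContinuousOn wpath (Set.Icc 0 1) ∧ wpath 0 = w0 ∧
        ∀ t ∈ Set.Icc (0 : ℝ) 1, ∀ i, G (wpath t, z i) = Ypath t i)
    (h : ℝ → ℝ) (hconc : ConcaveOn ℝ Set.univ h)
    (hsup : IsLUB (Set.range h) 0) (h0 : h 0 < 0) :
    ∀ w ∈ W, GlobalMinReachable
      (fun w' => sSup {s : ℝ | ∃ θ : EuclideanSpace ℝ (Fin J),
        s = (1 / (n : ℝ)) * ∑ i, h (f (θ, x i) - f (θ, G (w', z i)))}) w := by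
  intro w hw
  have : Infinite (EuclideanSpace ℝ (Fin d)) :=
    have : Nonempty (Fin d) := ⟨⟨0, hd⟩⟩
    inferInstance
  have hval : ∀ w', sSup {s : ℝ | ∃ θ : EuclideanSpace ℝ (Fin J),
      s = (1 / (n : ℝ)) * ∑ i, h (f (θ, x i) - f (θ, G (w', z i)))} =
      periodicCount x (fun i => G (w', z i)) * h 0 / n := fun w' =>
    sSup_eq_periodicCount_mul hx _ f hconc hsup (exists_agree_on_two_tuples hD x _)
  have hanti : Antitone fun c : ℕ => (c : ℝ) * h 0 / n := fun a b hab =>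
    div_le_div_of_nonneg_right (mul_le_mul_of_nonpos_right (Nat.cast_le.mpr hab) h0.le)
      n.cast_nonneg
  obtain ⟨y', γ, hγ, hy'⟩ := exists_path_periodicCount_eq hx (fun i => G (w, z i))
  obtain ⟨wpath, hcont, hw0, hwG⟩ :=
    hpath γ.extend γ.continuous_extend.continuousOn w hw fun i => by simp
  have hcount : ∀ t (ht : t ∈ Set.Icc (0 : ℝ) 1),
      periodicCount x (fun i => G (wpath t, z i)) = periodicCount x (γ ⟨t, ht⟩) :=
    fun t ht => by
      rw [← γ.extend_apply ht]
      exact congrArg _ (funext (hwG t ht))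
  refine ⟨wpath, hcont, hw0, fun s hs t ht hst => ?_, fun w' => ?_⟩
  · simp only [hval, hcount s hs, hcount t ht]
    exact hanti (hγ (Subtype.mk_le_mk.mpr hst))
  · simp only [hval, hcount 1 unitInterval.one_mem]
    rw [show (⟨1, _⟩ : unitInterval) = 1 from rfl, γ.target, hy']
    exact hanti (periodicCount_le x _)

theorem stmt16 {d n dz K J : ℕ} (hd : 1 ≤ d) (hn : 1 ≤ n)
    (x : Fin n → EuclideanSpace ℝ (Fin d)) (hx : Function.Injective x)
    (z : Fin n → EuclideanSpace ℝ (Fin dz)) (hz : Function.Injective z)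
    (G : EuclideanSpace ℝ (Fin K) × EuclideanSpace ℝ (Fin dz) → EuclideanSpace ℝ (Fin d))
    (hG : Continuous G)
    (f : EuclideanSpace ℝ (Fin J) × EuclideanSpace ℝ (Fin d) → ℝ)
    (W : Set (EuclideanSpace ℝ (Fin K)))
    -- (D-representation)
    (hD : ∀ v : Fin (2 * n) → EuclideanSpace ℝ (Fin d), Function.Injective v →
      ∀ b : Fin (2 * n) → ℝ, ∃ θ : EuclideanSpace ℝ (Fin J), ∀ i, f (θ, v i) = b i)
    -- (G-representation)
    (hGrep : ∀ Y : Fin n → EuclideanSpace ℝ (Fin d), ∃ w ∈ W, ∀ i, G (w, z i) = Y i)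
    -- (path-keeping)
    (hpath : ∀ Ypath : ℝ → (Fin n → EuclideanSpace ℝ (Fin d)),
      ContinuousOn Ypath (Set.Icc 0 1) →
      ∀ w0 ∈ W, (∀ i, G (w0, z i) = Ypath 0 i) →
      ∃ wpath : ℝ → EuclideanSpace ℝ (Fin K),
        ContinuousOn wpath (Set.Icc 0 1) ∧ wpath 0 = w0 ∧
        ∀ t ∈ Set.Icc (0 : ℝ) 1, ∀ i, G (wpath t, z i) = Ypath t i)
    (h : ℝ → ℝ) (hconc : ConcaveOn ℝ Set.univ h)
    (hsup : IsLUB (Set.range h) 0) (h0 : h 0 < 0) :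
    ∀ w ∈ W, GlobalMinReachable
      (fun w' => sSup {s : ℝ | ∃ θ : EuclideanSpace ℝ (Fin J),
        s = (1 / (n : ℝ)) * ∑ i, h (f (θ, x i) - f (θ, G (w', z i)))}) w :=
  stmt16_general hd x hx z G f W hD hpath h hconc hsup h0
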